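/- arXiv:0809.4745 — 6 statements merged into one kernel-verified Lean document; each statement's English description precedes it below -/
import Mathlib

section
/- For the paraboloid of revolution z = a(u² + v²) with a > 0 (a translation surface with f(u) = au², g(v) = av²), the mean curvature H and Gaussian curvature K are both positive everywhere and satisfy 8aH² = √K·(2a + √K)². -/
/-! With `α' = β' = c := 2a` and `w := 1 + α² + β²`, the curvature formulas collapse to
`H = c (1 + w) / (2 w^{3/2})` and `K = (c / w)²`, so `√K = c / w` and both sides of the identity
equal `c³ (1 + w)² / w³`. -/

open Real

lemma rpow_three_halves_sq {w : ℝ} (hw : 0 ≤ w) : (w ^ ((3 : ℝ) / 2)) ^ 2 = w ^ 3 := by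
  rw [← rpow_natCast, ← rpow_mul hw]
  norm_num

lemma paraboloid_curvature_identity {c w : ℝ} (hw : 0 < w) :
    4 * c * (c * (1 + w) / (2 * w ^ ((3 : ℝ) / 2))) ^ 2 = c / w * (c + c / w) ^ 2 := by
  simp only [div_pow, mul_pow, rpow_three_halves_sq hw.le]
  field_simp
  ring

/-- For the paraboloid of revolution `z = a(u² + v²)` with `a > 0` (so `α(u) = 2au`,
`β(v) = 2av`), the mean curvature `H` and Gaussian curvature `K` are both positive
everywhere and satisfy `8aH² = √K (2a + √K)²`. -/
theorem stmt_3 (a : ℝ) (ha : 0 < a) (u v : ℝ) :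
    let α : ℝ → ℝ := fun u => 2 * a * u
    let β : ℝ → ℝ := fun v => 2 * a * v
    let H : ℝ := ((1 + β v ^ 2) * deriv α u + (1 + α u ^ 2) * deriv β v) /
      (2 * (1 + α u ^ 2 + β v ^ 2) ^ ((3 : ℝ) / 2))
    let K : ℝ := deriv α u * deriv β v / (1 + α u ^ 2 + β v ^ 2) ^ 2
    0 < H ∧ 0 < K ∧ 8 * a * H ^ 2 = Real.sqrt K * (2 * a + Real.sqrt K) ^ 2 := by
  intro α β H K
  have hα' : deriv α u = 2 * a := by simp [α]
  have hβ' : deriv β v = 2 * a := by simp [β]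
  set w := 1 + α u ^ 2 + β v ^ 2
  have hw : 0 < w := by positivity
  have hH : H = 2 * a * (1 + w) / (2 * w ^ ((3 : ℝ) / 2)) := by
    show ((1 + β v ^ 2) * deriv α u + (1 + α u ^ 2) * deriv β v) / (2 * w ^ ((3 : ℝ) / 2)) = _
    rw [hα', hβ']
    congr 1
    simp only [w]
    ring
  have hK : K = (2 * a / w) ^ 2 := by
    show deriv α u * deriv β v / w ^ 2 = _
    rw [hα', hβ', div_pow, sq (2 * a)]
  have hsqrtK : √K = 2 * a / w := by
    rw [hK, sqrt_sq (by positivity)]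
  refine ⟨by rw [hH]; positivity, by rw [hK]; positivity, ?_⟩
  rw [hH, hsqrtK, ← paraboloid_curvature_identity hw]
  ring
end

section
/- There is no polynomial translation Weingarten surface r(u,v) = (u,v,f(u)+g(v)) in ℝ³ with both deg f' ≥ 2 and deg g' ≥ 2: if α = f' and β = g' are polynomials of degree ≥ 2, the Jacobian condition ∂(H,K)/∂(u,v) = 0 fails to hold identically. -/
open Polynomial

/-!
With `W = 1 + α² + β² ≥ 1`, the Jacobian `H_u K_v - H_v K_u` is a polynomial in
`α, α', α''` at `u` and `β, β', β''` at `v`, divided by `4 W⁵ √W`; so it vanishes exactly where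
that numerator does. Fix `v` with `β'(v) β''(v) ≠ 0` and read the numerator as a polynomial in `u`.
If `α` has degree `m ≥ 2` and leading coefficient `p`, its coefficient of `u ^ (7m - 2)` is
`2m (2m + 1) β'(v) β''(v) p⁷ ≠ 0`, so it cannot vanish for all `u`.
-/
/-- The mean curvature of the translation surface `r(u,v) = (u,v,f(u)+g(v))`, `α = f'`, `β = g'`. -/
noncomputable def meanCurv (α β : ℝ → ℝ) (u v : ℝ) : ℝ :=
  ((1 + β v ^ 2) * deriv α u + (1 + α u ^ 2) * deriv β v) /
    (2 * (1 + α u ^ 2 + β v ^ 2) ^ ((3 : ℝ) / 2))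

/-- The Gaussian curvature of the translation surface. -/
noncomputable def gaussCurv (α β : ℝ → ℝ) (u v : ℝ) : ℝ :=
  deriv α u * deriv β v / (1 + α u ^ 2 + β v ^ 2) ^ 2

/-- The Jacobian `∂(H,K)/∂(u,v)` of the curvatures. -/
noncomputable def jacobianHK (α β : ℝ → ℝ) (u v : ℝ) : ℝ :=
  deriv (fun x => meanCurv α β x v) u * deriv (fun y => gaussCurv α β u y) v -
    deriv (fun y => meanCurv α β u y) v * deriv (fun x => gaussCurv α β x v) u

/- `(a, a₁, a₂)` stands for `(α, α', α'')` at `u` and `(b, b₁, b₂)` for `(β, β', β'')` at `v`.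
The numerators live in any commutative ring so that they can be evaluated both at reals and at
polynomials in `u`. -/
section CurvatureNumerators

variable {R : Type*} [CommRing R]

def meanCurvDerivNum (a a₁ a₂ b b₁ : R) : R :=
  2 * (2 * a * a₁ * b₁ + (1 + b ^ 2) * a₂) * (1 + a ^ 2 + b ^ 2) -
    6 * a * a₁ * ((1 + b ^ 2) * a₁ + (1 + a ^ 2) * b₁)

def gaussCurvDerivNum (a a₁ a₂ b : R) : R :=
  a₂ * (1 + a ^ 2 + b ^ 2) - 4 * a * a₁ ^ 2

def weingartenNum (a a₁ a₂ b b₁ b₂ : R) : R :=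
  meanCurvDerivNum a a₁ a₂ b b₁ * a₁ * gaussCurvDerivNum b b₁ b₂ a -
    meanCurvDerivNum b b₁ b₂ a a₁ * b₁ * gaussCurvDerivNum a a₁ a₂ b

theorem map_weingartenNum {S : Type*} [CommRing S] (φ : R →+* S) (a a₁ a₂ b b₁ b₂ : R) :
    φ (weingartenNum a a₁ a₂ b b₁ b₂) =
      weingartenNum (φ a) (φ a₁) (φ a₂) (φ b) (φ b₁) (φ b₂) := by
  simp [weingartenNum, meanCurvDerivNum, gaussCurvDerivNum, map_ofNat]

end CurvatureNumerators

theorem meanCurv_comm (α β : ℝ → ℝ) (u v : ℝ) : meanCurv α β u v = meanCurv β α v u := by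
  rw [meanCurv, meanCurv, add_right_comm 1, add_comm ((1 + β v ^ 2) * _)]

theorem gaussCurv_comm (α β : ℝ → ℝ) (u v : ℝ) : gaussCurv α β u v = gaussCurv β α v u := by
  rw [gaussCurv, gaussCurv, add_right_comm 1, mul_comm (deriv α u)]

theorem Real.rpow_three_halves_eq_mul_sqrt {w : ℝ} (hw : 0 ≤ w) : w ^ ((3 : ℝ) / 2) = w * √w := by
  rw [show (3 : ℝ) / 2 = 1 + 1 / 2 by norm_num, Real.rpow_add' hw (by norm_num), Real.rpow_one,
    Real.sqrt_eq_rpow]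

section Curvatures

variable {α β : ℝ → ℝ} {u v : ℝ}

theorem hasDerivAt_one_add_sq_add_sq (hα : DifferentiableAt ℝ α u) (b : ℝ) :
    HasDerivAt (fun x => 1 + α x ^ 2 + b ^ 2) (2 * α u * deriv α u) u := by
  simpa using ((hα.hasDerivAt.pow 2).const_add 1).add_const (b ^ 2)

theorem hasDerivAt_meanCurv_fst (hα : DifferentiableAt ℝ α u)
    (hα' : DifferentiableAt ℝ (deriv α) u) :
    HasDerivAt (fun x => meanCurv α β x v)
      (meanCurvDerivNum (α u) (deriv α u) (deriv (deriv α) u) (β v) (deriv β v) /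
        (4 * (1 + α u ^ 2 + β v ^ 2) ^ 2 * √(1 + α u ^ 2 + β v ^ 2))) u := by
  have hW := hasDerivAt_one_add_sq_add_sq hα (β v)
  have hWpos : 0 < 1 + α u ^ 2 + β v ^ 2 := by positivity
  have hN := (hα'.hasDerivAt.const_mul (1 + β v ^ 2)).add
    (((hα.hasDerivAt.pow 2).const_add 1).mul_const (deriv β v))
  have hD := (hW.rpow_const (p := (3 : ℝ) / 2) (Or.inl hWpos.ne')).const_mul 2
  refine (hN.div hD (by positivity)).congr_deriv ?_
  simp only [Pi.add_apply, Pi.pow_apply]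
  rw [Real.rpow_three_halves_eq_mul_sqrt hWpos.le, show (3 : ℝ) / 2 - 1 = 1 / 2 by norm_num,
    ← Real.sqrt_eq_rpow, meanCurvDerivNum]
  field_simp
  ring

theorem hasDerivAt_meanCurv_snd (hβ : DifferentiableAt ℝ β v)
    (hβ' : DifferentiableAt ℝ (deriv β) v) :
    HasDerivAt (fun y => meanCurv α β u y)
      (meanCurvDerivNum (β v) (deriv β v) (deriv (deriv β) v) (α u) (deriv α u) /
        (4 * (1 + α u ^ 2 + β v ^ 2) ^ 2 * √(1 + α u ^ 2 + β v ^ 2))) v := by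
  simp_rw [meanCurv_comm α β u, add_right_comm 1 (α u ^ 2)]
  exact hasDerivAt_meanCurv_fst hβ hβ'

theorem hasDerivAt_gaussCurv_fst (hα : DifferentiableAt ℝ α u)
    (hα' : DifferentiableAt ℝ (deriv α) u) :
    HasDerivAt (fun x => gaussCurv α β x v)
      (deriv β v * gaussCurvDerivNum (α u) (deriv α u) (deriv (deriv α) u) (β v) /
        (1 + α u ^ 2 + β v ^ 2) ^ 3) u := by
  have hW := hasDerivAt_one_add_sq_add_sq hα (β v)
  have hWpos : 0 < 1 + α u ^ 2 + β v ^ 2 := by positivity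
  refine ((hα'.hasDerivAt.mul_const (deriv β v)).div (hW.pow 2)
    (pow_pos hWpos 2).ne').congr_deriv ?_
  simp only [Pi.pow_apply]
  rw [gaussCurvDerivNum]
  field_simp
  ring

theorem hasDerivAt_gaussCurv_snd (hβ : DifferentiableAt ℝ β v)
    (hβ' : DifferentiableAt ℝ (deriv β) v) :
    HasDerivAt (fun y => gaussCurv α β u y)
      (deriv α u * gaussCurvDerivNum (β v) (deriv β v) (deriv (deriv β) v) (α u) /
        (1 + α u ^ 2 + β v ^ 2) ^ 3) v := by
  simp_rw [gaussCurv_comm α β u, add_right_comm 1 (α u ^ 2)]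
  exact hasDerivAt_gaussCurv_fst hβ hβ'

theorem jacobianHK_eq (hα : DifferentiableAt ℝ α u) (hα' : DifferentiableAt ℝ (deriv α) u)
    (hβ : DifferentiableAt ℝ β v) (hβ' : DifferentiableAt ℝ (deriv β) v) :
    jacobianHK α β u v =
      weingartenNum (α u) (deriv α u) (deriv (deriv α) u) (β v) (deriv β v) (deriv (deriv β) v) /
        (4 * (1 + α u ^ 2 + β v ^ 2) ^ 5 * √(1 + α u ^ 2 + β v ^ 2)) := by
  rw [jacobianHK, (hasDerivAt_meanCurv_fst hα hα').deriv, (hasDerivAt_meanCurv_snd hβ hβ').deriv,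
    (hasDerivAt_gaussCurv_fst hα hα').deriv, (hasDerivAt_gaussCurv_snd hβ hβ').deriv,
    weingartenNum]
  field_simp

theorem jacobianHK_eq_zero_iff (hα : DifferentiableAt ℝ α u)
    (hα' : DifferentiableAt ℝ (deriv α) u) (hβ : DifferentiableAt ℝ β v)
    (hβ' : DifferentiableAt ℝ (deriv β) v) :
    jacobianHK α β u v = 0 ↔
      weingartenNum (α u) (deriv α u) (deriv (deriv α) u) (β v) (deriv β v)
        (deriv (deriv β) v) = 0 := by
  rw [jacobianHK_eq hα hα' hβ hβ', div_eq_zero_iff, or_iff_left]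
  positivity

end Curvatures

theorem jacobianHK_eval_eq_zero_iff (α β : ℝ[X]) (u v : ℝ) :
    jacobianHK (fun x => α.eval x) (fun y => β.eval y) u v = 0 ↔
      weingartenNum (α.eval u) (α.derivative.eval u) (α.derivative.derivative.eval u)
        (β.eval v) (β.derivative.eval v) (β.derivative.derivative.eval v) = 0 := by
  have hderiv (p : ℝ[X]) : deriv (fun x => p.eval x) = fun x => p.derivative.eval x :=
    funext fun _ => Polynomial.deriv p
  rw [jacobianHK_eq_zero_iff α.differentiableAt (hderiv α ▸ Polynomial.differentiableAt _)
    β.differentiableAt (hderiv β ▸ Polynomial.differentiableAt _)]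
  simp only [hderiv]

namespace Polynomial

/-- Unlike with `leadingCoeff`, the coefficient `c` at the degree bound `d` may vanish, so sums with
cancellation need no case distinction. -/
def HasTopCoeff {R : Type*} [Semiring R] (p : R[X]) (d : ℕ) (c : R) : Prop :=
  p.natDegree ≤ d ∧ p.coeff d = c

section Semiring

variable {R : Type*} [Semiring R] {p q : R[X]} {d e : ℕ} {c c' : R}

theorem HasTopCoeff.congr (hp : HasTopCoeff p d c) (hd : d = e) (hc : c = c') :
    HasTopCoeff p e c' :=
  hd ▸ hc ▸ hp

theorem hasTopCoeff_of_natDegree_lt (h : p.natDegree < d) : HasTopCoeff p d 0 :=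
  ⟨h.le, coeff_eq_zero_of_natDegree_lt h⟩

theorem HasTopCoeff.zero_of_lt (hp : HasTopCoeff p d c) (h : d < e) : HasTopCoeff p e 0 :=
  hasTopCoeff_of_natDegree_lt (hp.1.trans_lt h)

theorem hasTopCoeff_C (r : R) : HasTopCoeff (C r) 0 r :=
  ⟨(natDegree_C r).le, coeff_C_zero⟩

theorem hasTopCoeff_one : HasTopCoeff (1 : R[X]) 0 1 :=
  ⟨natDegree_one.le, coeff_one_zero⟩

theorem hasTopCoeff_ofNat (n : ℕ) [n.AtLeastTwo] : HasTopCoeff (ofNat(n) : R[X]) 0 ofNat(n) :=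
  ⟨(natDegree_ofNat n).le, coeff_ofNat_zero n⟩

theorem HasTopCoeff.add (hp : HasTopCoeff p d c) (hq : HasTopCoeff q d c') :
    HasTopCoeff (p + q) d (c + c') :=
  ⟨(natDegree_add_le _ _).trans (max_le hp.1 hq.1), by rw [coeff_add, hp.2, hq.2]⟩

theorem HasTopCoeff.mul (hp : HasTopCoeff p d c) (hq : HasTopCoeff q e c') :
    HasTopCoeff (p * q) (d + e) (c * c') :=
  ⟨natDegree_mul_le.trans (add_le_add hp.1 hq.1), by
    rw [coeff_mul_add_eq_of_natDegree_le hp.1 hq.1, hp.2, hq.2]⟩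

theorem HasTopCoeff.pow (hp : HasTopCoeff p d c) (n : ℕ) : HasTopCoeff (p ^ n) (n * d) (c ^ n) :=
  ⟨natDegree_pow_le_of_le n hp.1, by rw [coeff_pow_of_natDegree_le hp.1, hp.2]⟩

theorem HasTopCoeff.derivative (hp : HasTopCoeff p d c) :
    HasTopCoeff (derivative p) (d - 1) (d * c) := by
  refine ⟨(natDegree_derivative_le p).trans (Nat.sub_le_sub_right hp.1 1), ?_⟩
  rcases d with _ | d
  · simp [coeff_derivative, coeff_eq_zero_of_natDegree_lt (hp.1.trans_lt zero_lt_one)]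
  · rw [coeff_derivative, Nat.add_sub_cancel, hp.2, Nat.cast_comm, Nat.cast_succ]

theorem hasTopCoeff_natDegree (p : R[X]) :
    HasTopCoeff p p.natDegree p.leadingCoeff :=
  ⟨le_rfl, rfl⟩

theorem HasTopCoeff.one_add_sq (hp : HasTopCoeff p d c) (hd : 1 ≤ d) :
    HasTopCoeff (1 + p ^ 2) (2 * d) (c ^ 2) :=
  ((hasTopCoeff_one.zero_of_lt (by omega)).add (hp.pow 2)).congr rfl (zero_add _)

theorem hasTopCoeff_one_add_C_sq (b : R) : HasTopCoeff (1 + C b ^ 2) 0 (1 + b ^ 2) :=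
  hasTopCoeff_one.add (((hasTopCoeff_C b).pow 2).congr rfl rfl)

theorem HasTopCoeff.one_add_sq_add_C_sq (hp : HasTopCoeff p d c) (hd : 1 ≤ d) (b : R) :
    HasTopCoeff (1 + p ^ 2 + C b ^ 2) (2 * d) (c ^ 2) :=
  ((hp.one_add_sq hd).add (((hasTopCoeff_C b).pow 2).zero_of_lt (by omega))).congr rfl
    (add_zero _)

theorem HasTopCoeff.one_add_C_sq_add_sq (hp : HasTopCoeff p d c) (hd : 1 ≤ d) (b : R) :
    HasTopCoeff (1 + C b ^ 2 + p ^ 2) (2 * d) (c ^ 2) :=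
  (((hasTopCoeff_one_add_C_sq b).zero_of_lt (by omega)).add (hp.pow 2)).congr rfl (zero_add _)

end Semiring

theorem HasTopCoeff.sub {R : Type*} [Ring R] {p q : R[X]} {d : ℕ} {c c' : R}
    (hp : HasTopCoeff p d c) (hq : HasTopCoeff q d c') : HasTopCoeff (p - q) d (c - c') :=
  ⟨(natDegree_sub_le _ _).trans (max_le hp.1 hq.1), by rw [coeff_sub, hp.2, hq.2]⟩

end Polynomial

section TopCoeffs

variable {R : Type*} [CommRing R] {α : R[X]} {m : ℕ} {p : R}

theorem hasTopCoeff_meanCurvDerivNum_fst (hα : HasTopCoeff α m p) (hm : 1 ≤ m) (b b₁ : R) :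
    HasTopCoeff (meanCurvDerivNum α (derivative α) (derivative (derivative α)) (C b) (C b₁))
      (4 * m - 1) (-(2 * m * b₁ * p ^ 4)) := by
  have hα₁ := hα.derivative
  have hα₂ := hα₁.derivative
  have hb := hasTopCoeff_one_add_C_sq b
  have hW := hα.one_add_sq_add_C_sq hm b
  have hNu : HasTopCoeff (2 * α * derivative α * C b₁ + (1 + C b ^ 2) * derivative (derivative α))
      (2 * m - 1) (2 * m * b₁ * p ^ 2) :=
    (((((hasTopCoeff_ofNat 2).mul hα).mul hα₁).mul (hasTopCoeff_C b₁)).add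
      ((hb.mul hα₂).zero_of_lt (by omega))).congr (by omega) (by ring)
  have hN : HasTopCoeff ((1 + C b ^ 2) * derivative α + (1 + α ^ 2) * C b₁) (2 * m) (b₁ * p ^ 2) :=
    (((hb.mul hα₁).zero_of_lt (by omega)).add ((hα.one_add_sq hm).mul (hasTopCoeff_C b₁))).congr
      (by omega) (by ring)
  have h₁ := (((hasTopCoeff_ofNat 2).mul hNu).mul hW).congr (e := 4 * m - 1) (by omega) rfl
  have h₂ := (((hasTopCoeff_ofNat 6).mul hα).mul hα₁).mul hN
    |>.congr (e := 4 * m - 1) (by omega) rfl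
  exact (h₁.sub h₂).congr rfl (by ring)

theorem hasTopCoeff_meanCurvDerivNum_snd (hα : HasTopCoeff α m p) (hm : 1 ≤ m) (b b₁ b₂ : R) :
    HasTopCoeff (meanCurvDerivNum (C b) (C b₁) (C b₂) α (derivative α)) (4 * m)
      (2 * b₂ * p ^ 4) := by
  have hα₁ := hα.derivative
  have hb := hasTopCoeff_one_add_C_sq b
  have hW := hα.one_add_C_sq_add_sq hm b
  have hNv : HasTopCoeff (2 * C b * C b₁ * derivative α + (1 + α ^ 2) * C b₂) (2 * m)
      (b₂ * p ^ 2) :=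
    (((((hasTopCoeff_ofNat 2).mul (hasTopCoeff_C b)).mul (hasTopCoeff_C b₁)).mul hα₁).zero_of_lt
      (by omega) |>.add ((hα.one_add_sq hm).mul (hasTopCoeff_C b₂))).congr rfl (by ring)
  have hN : HasTopCoeff ((1 + α ^ 2) * C b₁ + (1 + C b ^ 2) * derivative α) (2 * m)
      (b₁ * p ^ 2) :=
    (((hα.one_add_sq hm).mul (hasTopCoeff_C b₁)).add ((hb.mul hα₁).zero_of_lt (by omega))).congr
      rfl (by ring)
  have h₁ := (((hasTopCoeff_ofNat 2).mul hNv).mul hW).congr (e := 4 * m) (by omega) rfl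
  have h₂ := ((((hasTopCoeff_ofNat 6).mul (hasTopCoeff_C b)).mul (hasTopCoeff_C b₁)).mul hN
    |>.zero_of_lt (e := 4 * m) (by omega))
  exact (h₁.sub h₂).congr rfl (by ring)

theorem hasTopCoeff_gaussCurvDerivNum_fst (hα : HasTopCoeff α m p) (hm : 2 ≤ m) (b : R) :
    HasTopCoeff (gaussCurvDerivNum α (derivative α) (derivative (derivative α)) (C b))
      (3 * m - 2) (-(m * (3 * m + 1) * p ^ 3)) := by
  have hα₁ := hα.derivative
  have hW := hα.one_add_sq_add_C_sq (by omega) b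
  have h₁ := (hα₁.derivative.mul hW).congr (e := 3 * m - 2) (by omega) rfl
  have h₂ := (((hasTopCoeff_ofNat 4).mul hα).mul (hα₁.pow 2)).congr (e := 3 * m - 2) (by omega) rfl
  refine (h₁.sub h₂).congr rfl ?_
  push_cast [Nat.cast_sub (by omega : 1 ≤ m)]
  ring

theorem hasTopCoeff_gaussCurvDerivNum_snd (hα : HasTopCoeff α m p) (hm : 1 ≤ m) (b b₁ b₂ : R) :
    HasTopCoeff (gaussCurvDerivNum (C b) (C b₁) (C b₂) α) (2 * m) (b₂ * p ^ 2) := by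
  have hW := hα.one_add_C_sq_add_sq hm b
  have h₂ := (((hasTopCoeff_ofNat 4).mul (hasTopCoeff_C b)).mul ((hasTopCoeff_C b₁).pow 2)
    |>.zero_of_lt (e := 2 * m) (by omega))
  exact (((hasTopCoeff_C b₂).mul hW).congr (zero_add _) rfl |>.sub h₂).congr rfl (sub_zero _)

theorem hasTopCoeff_weingartenNum (hα : HasTopCoeff α m p) (hm : 2 ≤ m) (b b₁ b₂ : R) :
    HasTopCoeff
      (weingartenNum α (derivative α) (derivative (derivative α)) (C b) (C b₁) (C b₂))
      (7 * m - 2) (2 * m * (2 * m + 1) * b₁ * b₂ * p ^ 7) := by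
  have h₁ := ((hasTopCoeff_meanCurvDerivNum_fst hα (by omega) b b₁).mul hα.derivative).mul
    (hasTopCoeff_gaussCurvDerivNum_snd hα (by omega) b b₁ b₂)
    |>.congr (e := 7 * m - 2) (by omega) rfl
  have h₂ := ((hasTopCoeff_meanCurvDerivNum_snd hα (by omega) b b₁ b₂).mul (hasTopCoeff_C b₁)).mul
    (hasTopCoeff_gaussCurvDerivNum_fst hα hm b)
    |>.congr (e := 7 * m - 2) (by omega) rfl
  exact (h₁.sub h₂).congr rfl (by ring)

end TopCoeffs

theorem weingartenNum_ne_zero {R : Type*} [CommRing R] [IsDomain R] [CharZero R] {α : R[X]}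
    (hα : 2 ≤ α.natDegree) (b : R) {b₁ b₂ : R} (hb₁ : b₁ ≠ 0) (hb₂ : b₂ ≠ 0) :
    weingartenNum α (derivative α) (derivative (derivative α)) (C b) (C b₁) (C b₂) ≠ 0 := by
  intro h
  have hα₀ : α.leadingCoeff ≠ 0 := leadingCoeff_ne_zero.2 (by rintro rfl; simp at hα)
  have hcoeff := (hasTopCoeff_weingartenNum (hasTopCoeff_natDegree α) hα b b₁ b₂).2
  rw [h, coeff_zero, eq_comm] at hcoeff
  have hm : (α.natDegree : R) ≠ 0 := Nat.cast_ne_zero.2 (by omega)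
  have hm' : (2 * α.natDegree + 1 : R) ≠ 0 := by exact_mod_cast (2 * α.natDegree).succ_ne_zero
  simp [hα₀, hb₁, hb₂, hm, hm'] at hcoeff

/-- There is no polynomial translation Weingarten surface with both `deg f' ≥ 2` and
`deg g' ≥ 2`: such a surface never satisfies the Jacobian condition identically. -/
theorem stmt_8 (f g : Polynomial ℝ) (hf : 2 ≤ f.derivative.natDegree)
    (hg : 2 ≤ g.derivative.natDegree) :
    ¬ (∀ u v : ℝ,
        jacobianHK (fun x => f.derivative.eval x) (fun y => g.derivative.eval y) u v = 0) := by
  intro hJ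
  set α := f.derivative
  set β := g.derivative
  have hβ : derivative β * derivative (derivative β) ≠ 0 :=
    mul_ne_zero (derivative_ne_zero.2 (by omega))
      (derivative_ne_zero.2 (by rw [natDegree_derivative]; omega))
  obtain ⟨v, hv⟩ : ∃ v, (derivative β * derivative (derivative β)).eval v ≠ 0 :=
    not_forall.1 fun h => hβ (Polynomial.funext (by simpa using h))
  rw [eval_mul, mul_ne_zero_iff] at hv
  refine weingartenNum_ne_zero hf (β.eval v) hv.1 hv.2 (Polynomial.funext fun u => ?_)
  rw [eval_zero, ← coe_evalRingHom, map_weingartenNum]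
  simpa only [coe_evalRingHom, eval_C] using (jacobianHK_eval_eq_zero_iff α β u v).1 (hJ u v)
end

section
/- Let S be a translation surface r(u,v) = (u,v,f(u)+g(v)) satisfying the linear Weingarten relation 2aH + bK = 0 with (a,b) ≠ (0,0). If there exist u₀, v₀ with f''(u₀) ≠ 0 and g''(v₀) ≠ 0, then b = 0 and hence H ≡ 0 (S is minimal). -/
lemma sqrt_diff_eq' (p q : ℝ) (hp : 0 < p) (hq : 0 < q) :
    1/Real.sqrt p - 1/Real.sqrt q
      = (q - p) / (Real.sqrt p * Real.sqrt q * (Real.sqrt p + Real.sqrt q)) := by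
  have hsp : 0 < Real.sqrt p := Real.sqrt_pos.2 hp
  have hsq : 0 < Real.sqrt q := Real.sqrt_pos.2 hq
  have hp2 : Real.sqrt p ^ 2 = p := Real.sq_sqrt hp.le
  have hq2 : Real.sqrt q ^ 2 = q := Real.sq_sqrt hq.le
  field_simp
  linear_combination hq2 - hp2

lemma rect_ne' (x₁ x₂ y₁ y₂ : ℝ) (hx₁ : 0 < x₁) (hx₂ : 0 < x₂) (hx : x₁ ≠ x₂)
    (hy₁ : 0 ≤ y₁) (hy₂ : 0 ≤ y₂) (hy : y₁ ≠ y₂) :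
    1/Real.sqrt (x₁+y₁) - 1/Real.sqrt (x₂+y₁) ≠ 1/Real.sqrt (x₁+y₂) - 1/Real.sqrt (x₂+y₂) := by
  have key : ∀ y y' : ℝ, 0 ≤ y → 0 ≤ y' → y < y' →
      1/Real.sqrt (x₁+y) - 1/Real.sqrt (x₂+y) = 1/Real.sqrt (x₁+y') - 1/Real.sqrt (x₂+y') →
      False := by
    intro y y' hy hy' hlt h
    have p1 : (0:ℝ) < x₁ + y := by linarith
    have p2 : (0:ℝ) < x₂ + y := by linarith
    have p1' : (0:ℝ) < x₁ + y' := by linarith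
    have p2' : (0:ℝ) < x₂ + y' := by linarith
    rw [sqrt_diff_eq' _ _ p1 p2, sqrt_diff_eq' _ _ p1' p2'] at h
    have s1 : 0 < Real.sqrt (x₁+y) := Real.sqrt_pos.2 p1
    have s2 : 0 < Real.sqrt (x₂+y) := Real.sqrt_pos.2 p2
    have s1' : 0 < Real.sqrt (x₁+y') := Real.sqrt_pos.2 p1'
    have s2' : 0 < Real.sqrt (x₂+y') := Real.sqrt_pos.2 p2'
    have dA : (0:ℝ) < Real.sqrt (x₁+y) * Real.sqrt (x₂+y) * (Real.sqrt (x₁+y) + Real.sqrt (x₂+y)) := by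
      positivity
    have dB : (0:ℝ) < Real.sqrt (x₁+y') * Real.sqrt (x₂+y') * (Real.sqrt (x₁+y') + Real.sqrt (x₂+y')) := by
      positivity
    have hnum : x₂ + y - (x₁ + y) = x₂ - x₁ := by ring
    have hnum' : x₂ + y' - (x₁ + y') = x₂ - x₁ := by ring
    rw [hnum, hnum', div_eq_div_iff dA.ne' dB.ne'] at h
    have hd : x₂ - x₁ ≠ 0 := sub_ne_zero.2 (Ne.symm hx)
    have hEeq : Real.sqrt (x₁+y') * Real.sqrt (x₂+y') * (Real.sqrt (x₁+y') + Real.sqrt (x₂+y'))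
        = Real.sqrt (x₁+y) * Real.sqrt (x₂+y) * (Real.sqrt (x₁+y) + Real.sqrt (x₂+y)) := by
      apply mul_left_cancel₀ hd
      linarith [h]
    have l1 : Real.sqrt (x₁+y) < Real.sqrt (x₁+y') := Real.sqrt_lt_sqrt p1.le (by linarith)
    have l2 : Real.sqrt (x₂+y) < Real.sqrt (x₂+y') := Real.sqrt_lt_sqrt p2.le (by linarith)
    have q1 : Real.sqrt (x₁+y)^2 < Real.sqrt (x₁+y')^2 := by nlinarith
    have q2 : Real.sqrt (x₂+y)^2 < Real.sqrt (x₂+y')^2 := by nlinarith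
    have m1 : Real.sqrt (x₁+y)^2 * Real.sqrt (x₂+y) < Real.sqrt (x₁+y')^2 * Real.sqrt (x₂+y') :=
      mul_lt_mul'' q1 l2 (by positivity) (by positivity)
    have m2 : Real.sqrt (x₁+y) * Real.sqrt (x₂+y)^2 < Real.sqrt (x₁+y') * Real.sqrt (x₂+y')^2 :=
      mul_lt_mul'' l1 q2 (by positivity) (by positivity)
    nlinarith [m1, m2, hEeq]
  intro h
  rcases hy.lt_or_gt with hlt | hlt
  · exact key y₁ y₂ hy₁ hy₂ hlt h
  · exact key y₂ y₁ hy₂ hy₁ hlt h.symm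

/-- an everywhere-differentiable function with continuous, nonvanishing derivative is injective -/
lemma inj_of_deriv_ne (φ : ℝ → ℝ) (hc : Continuous (deriv φ))
    (hne : ∀ x, deriv φ x ≠ 0) : Function.Injective φ := by
  have hsign : (∀ x, 0 < deriv φ x) ∨ (∀ x, deriv φ x < 0) := by
    by_contra hcon
    push_neg at hcon
    obtain ⟨⟨x₁, h₁⟩, ⟨x₂, h₂⟩⟩ := hcon
    have h₁' : deriv φ x₁ < 0 := lt_of_le_of_ne h₁ (hne x₁)
    have h₂' : 0 < deriv φ x₂ := lt_of_le_of_ne h₂ (Ne.symm (hne x₂))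
    have : (0:ℝ) ∈ Set.uIcc (deriv φ x₁) (deriv φ x₂) :=
      Set.mem_uIcc.2 (Or.inl ⟨h₁'.le, h₂'.le⟩)
    obtain ⟨z, _, hz⟩ := intermediate_value_uIcc (hc.continuousOn) this
    exact hne z hz
  rcases hsign with hp | hn
  · exact (strictMono_of_deriv_pos hp).injective
  · exact (strictAnti_of_deriv_neg hn).injective

/-- among three distinct reals, two have distinct squares -/
lemma two_sq_ne (c₀ c₁ c₂ : ℝ) (h01 : c₀ ≠ c₁) (h02 : c₀ ≠ c₂) (h12 : c₁ ≠ c₂) :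
    (c₀^2 ≠ c₁^2) ∨ (c₀^2 ≠ c₂^2) := by
  by_contra h
  push_neg at h
  obtain ⟨e1, e2⟩ := h
  have a1 : c₁ = -c₀ := by
    have : (c₁ - c₀) * (c₁ + c₀) = 0 := by linear_combination -e1
    rcases mul_eq_zero.1 this with h' | h'
    · exact absurd (by linarith) h01
    · linarith
  have a2 : c₂ = -c₀ := by
    have : (c₂ - c₀) * (c₂ + c₀) = 0 := by linear_combination -e2
    rcases mul_eq_zero.1 this with h' | h'
    · exact absurd (by linarith) h02
    · linarith
  exact h12 (a1.trans a2.symm)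
/-- If a translation surface `r(u,v) = (u,v,f(u)+g(v))` satisfies `2aH + bK = 0` with
`(a,b) ≠ (0,0)`, and there exist `u₀, v₀` with `f''(u₀) ≠ 0` and `g''(v₀) ≠ 0`, then `b = 0`
and `H ≡ 0`, i.e. the surface is minimal. -/
theorem stmt_11 (f g : ℝ → ℝ) (hf : ContDiff ℝ (⊤ : ℕ∞) f) (hg : ContDiff ℝ (⊤ : ℕ∞) g)
    (a b : ℝ) (hab : (a, b) ≠ (0, 0))
    (hW : ∀ u v : ℝ,
      2 * a * meanCurv (deriv f) (deriv g) u v + b * gaussCurv (deriv f) (deriv g) u v = 0)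
    (hu₀ : ∃ u₀ : ℝ, deriv (deriv f) u₀ ≠ 0) (hv₀ : ∃ v₀ : ℝ, deriv (deriv g) v₀ ≠ 0) :
    b = 0 ∧ ∀ u v : ℝ, meanCurv (deriv f) (deriv g) u v = 0 := by
  obtain ⟨u₀, hu⟩ := hu₀
  obtain ⟨v₀, hv⟩ := hv₀
  -- master equation
  have master : ∀ u v : ℝ,
      a * ((1 + deriv g v ^2) * deriv (deriv f) u + (1 + deriv f u ^2) * deriv (deriv g) v)
          * Real.sqrt (1 + deriv f u ^2 + deriv g v ^2)
        + b * (deriv (deriv f) u * deriv (deriv g) v) = 0 := by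
    intro u v
    have h := hW u v
    rw [meanCurv, gaussCurv] at h
    set Δ := 1 + deriv f u ^2 + deriv g v ^2 with hΔ
    have hΔ0 : 0 < Δ := by positivity
    have hS : 0 < Real.sqrt Δ := Real.sqrt_pos.2 hΔ0
    have hS2 : Real.sqrt Δ ^ 2 = Δ := Real.sq_sqrt hΔ0.le
    have h32 : Δ ^ ((3:ℝ)/2) = Δ * Real.sqrt Δ := by
      rw [Real.sqrt_eq_rpow]
      rw [show ((3:ℝ)/2) = 1 + 1/2 by norm_num, Real.rpow_add hΔ0, Real.rpow_one]
    rw [h32] at h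
    field_simp at h
    have hG : (2*Δ*Real.sqrt Δ) *
        (a * ((1 + deriv g v ^2) * deriv (deriv f) u + (1 + deriv f u ^2) * deriv (deriv g) v)
          * Real.sqrt Δ + b * (deriv (deriv f) u * deriv (deriv g) v)) = 0 := by
      linear_combination 2*Δ*h + 2*a*((1 + deriv g v ^2) * deriv (deriv f) u
        + (1 + deriv f u ^2) * deriv (deriv g) v)*Δ*hS2
    have h2 : (2*Δ*Real.sqrt Δ) ≠ 0 := by positivity
    exact (mul_eq_zero.1 hG).resolve_left h2
  -- a ≠ 0
  have ha : a ≠ 0 := by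
    intro ha0
    have hb0 : b ≠ 0 := by
      intro hb0; exact hab (by rw [ha0, hb0])
    have h := master u₀ v₀
    rw [ha0] at h
    simp only [zero_mul, zero_add] at h
    have : deriv (deriv f) u₀ * deriv (deriv g) v₀ = 0 := by
      rcases mul_eq_zero.1 h with h' | h'
      · exact absurd h' hb0
      · exact h'
    rcases mul_eq_zero.1 this with h' | h'
    · exact hu h'
    · exact hv h'
  -- b = 0
  have hb : b = 0 := by
    by_contra hb
    -- second derivatives never vanish
    have hβ' : ∀ v, deriv (deriv g) v ≠ 0 := by
      intro v h0
      have h := master u₀ v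
      rw [h0] at h
      simp only [mul_zero, add_zero] at h
      have hS : 0 < Real.sqrt (1 + deriv f u₀ ^2 + deriv g v ^2) :=
        Real.sqrt_pos.2 (by positivity)
      have h1 : (0:ℝ) < 1 + deriv g v ^ 2 := by positivity
      exact (mul_ne_zero (mul_ne_zero ha (mul_ne_zero h1.ne' hu)) hS.ne') h
    have hα' : ∀ u, deriv (deriv f) u ≠ 0 := by
      intro u h0
      have h := master u v₀
      rw [h0] at h
      simp only [mul_zero, zero_mul, add_zero, zero_add] at h
      have hS : 0 < Real.sqrt (1 + deriv f u ^2 + deriv g v₀ ^2) :=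
        Real.sqrt_pos.2 (by positivity)
      have h1 : (0:ℝ) < 1 + deriv f u ^ 2 := by positivity
      exact (mul_ne_zero (mul_ne_zero ha (mul_ne_zero h1.ne' hv)) hS.ne') h
    -- injectivity of the first derivatives
    have hf' : ContDiff ℝ ((⊤:ℕ∞):WithTop ℕ∞) f := hf.of_le (by simp)
    have hg' : ContDiff ℝ ((⊤:ℕ∞):WithTop ℕ∞) g := hg.of_le (by simp)
    have hcα : Continuous (deriv (deriv f)) :=
      ((contDiff_infty_iff_deriv.1 ((contDiff_infty_iff_deriv.1 hf').2)).2).continuous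
    have hcβ : Continuous (deriv (deriv g)) :=
      ((contDiff_infty_iff_deriv.1 ((contDiff_infty_iff_deriv.1 hg').2)).2).continuous
    have hinjα : Function.Injective (deriv f) := inj_of_deriv_ne _ hcα hα'
    have hinjβ : Function.Injective (deriv g) := inj_of_deriv_ne _ hcβ hβ'
    -- choose points with distinct squares
    have hne01 : deriv f 0 ≠ deriv f 1 := fun h => by
      have := hinjα h; norm_num at this
    have hne02 : deriv f 0 ≠ deriv f 2 := fun h => by
      have := hinjα h; norm_num at this
    have hne12 : deriv f 1 ≠ deriv f 2 := fun h => by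
      have := hinjα h; norm_num at this
    have gne01 : deriv g 0 ≠ deriv g 1 := fun h => by
      have := hinjβ h; norm_num at this
    have gne02 : deriv g 0 ≠ deriv g 2 := fun h => by
      have := hinjβ h; norm_num at this
    have gne12 : deriv g 1 ≠ deriv g 2 := fun h => by
      have := hinjβ h; norm_num at this
    obtain ⟨u₁, u₂, hxne⟩ : ∃ u₁ u₂ : ℝ, deriv f u₁ ^ 2 ≠ deriv f u₂ ^ 2 := by
      rcases two_sq_ne _ _ _ hne01 hne02 hne12 with h | h
      · exact ⟨0, 1, h⟩
      · exact ⟨0, 2, h⟩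
    obtain ⟨v₁, v₂, hyne⟩ : ∃ v₁ v₂ : ℝ, deriv g v₁ ^ 2 ≠ deriv g v₂ ^ 2 := by
      rcases two_sq_ne _ _ _ gne01 gne02 gne12 with h | h
      · exact ⟨0, 1, h⟩
      · exact ⟨0, 2, h⟩
    -- the separated equation
    have key : ∀ u v : ℝ,
        (1 + deriv f u ^2)/(deriv (deriv f) u) + (1 + deriv g v ^2)/(deriv (deriv g) v)
          = (-b/a) / Real.sqrt (1 + deriv f u ^2 + deriv g v ^2) := by
      intro u v
      have hm := master u v
      have hS : 0 < Real.sqrt (1 + deriv f u ^2 + deriv g v ^2) :=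
        Real.sqrt_pos.2 (by positivity)
      have hA := hα' u
      have hB := hβ' v
      rw [div_add_div _ _ hA hB, div_eq_div_iff (mul_ne_zero hA hB) hS.ne']
      apply mul_left_cancel₀ ha
      rw [show a * (-b/a * (deriv (deriv f) u * deriv (deriv g) v))
          = -b * (deriv (deriv f) u * deriv (deriv g) v) by field_simp]
      linear_combination hm
    have h11 := key u₁ v₁
    have h12 := key u₁ v₂
    have h21 := key u₂ v₁
    have h22 := key u₂ v₂
    have hk0 : -b/a ≠ 0 := div_ne_zero (neg_ne_zero.2 hb) ha
    have hcomb : (-b/a) * (1/Real.sqrt (1 + deriv f u₁ ^2 + deriv g v₁ ^2)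
        - 1/Real.sqrt (1 + deriv f u₂ ^2 + deriv g v₁ ^2)
        - 1/Real.sqrt (1 + deriv f u₁ ^2 + deriv g v₂ ^2)
        + 1/Real.sqrt (1 + deriv f u₂ ^2 + deriv g v₂ ^2)) = 0 := by
      linear_combination h21 + h12 - h11 - h22
    have hzero := (mul_eq_zero.1 hcomb).resolve_left hk0
    have hfin : 1/Real.sqrt ((1 + deriv f u₁ ^2) + deriv g v₁ ^2)
        - 1/Real.sqrt ((1 + deriv f u₂ ^2) + deriv g v₁ ^2)
        = 1/Real.sqrt ((1 + deriv f u₁ ^2) + deriv g v₂ ^2)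
        - 1/Real.sqrt ((1 + deriv f u₂ ^2) + deriv g v₂ ^2) := by linarith
    exact rect_ne' (1 + deriv f u₁ ^2) (1 + deriv f u₂ ^2) (deriv g v₁ ^2) (deriv g v₂ ^2)
      (by positivity) (by positivity) (fun h => hxne (by linarith))
      (sq_nonneg _) (sq_nonneg _) hyne hfin
  refine ⟨hb, ?_⟩
  intro u v
  have h := hW u v
  rw [hb] at h
  simp only [zero_mul, add_zero] at h
  have h2a : (2:ℝ) * a ≠ 0 := by simpa using ha
  rcases mul_eq_zero.1 h with h' | h'
  · exact absurd h' h2a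
  · exact h'
end

section
/- Suppose a[(1+α(u)²)/α'(u) + (1+β(v)²)/β'(v)] = −b/√(1+α(u)²+β(v)²) holds for all u in an interval I and v in an interval J, where α' ≠ 0 on I and β' ≠ 0 on J and α, β are smooth. Then differentiating in u and then in v gives 3b·α(u)β(v)α'(u)β'(v)·(1+α(u)²+β(v)²)^{−5/2} = 0, hence b·α(u)β(v) = 0 on I × J. -/
lemma key_ineq (A B t1 t2 : ℝ) (hA : 0 < A) (ht1 : 0 ≤ t1) (ht2 : 0 ≤ t2)
    (hAB : A < B) (ht : t1 < t2) :
    1/Real.sqrt (A+t1) + 1/Real.sqrt (B+t2) ≠ 1/Real.sqrt (A+t2) + 1/Real.sqrt (B+t1) := by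
  intro h
  set a1 := Real.sqrt (A+t1) with ha1
  set a2 := Real.sqrt (A+t2) with ha2
  set b1 := Real.sqrt (B+t1) with hb1
  set b2 := Real.sqrt (B+t2) with hb2
  have pa1 : 0 < a1 := Real.sqrt_pos.2 (by linarith)
  have pa2 : 0 < a2 := Real.sqrt_pos.2 (by linarith)
  have pb1 : 0 < b1 := Real.sqrt_pos.2 (by linarith)
  have pb2 : 0 < b2 := Real.sqrt_pos.2 (by linarith)
  have sa1 : a1^2 = A+t1 := Real.sq_sqrt (by linarith)
  have sa2 : a2^2 = A+t2 := Real.sq_sqrt (by linarith)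
  have sb1 : b1^2 = B+t1 := Real.sq_sqrt (by linarith)
  have sb2 : b2^2 = B+t2 := Real.sq_sqrt (by linarith)
  have h12 : a1 < a2 := Real.sqrt_lt_sqrt (by linarith) (by linarith)
  have h34 : b1 < b2 := Real.sqrt_lt_sqrt (by linarith) (by linarith)
  have h13 : a1 < b1 := Real.sqrt_lt_sqrt (by linarith) (by linarith)
  have h24 : a2 < b2 := Real.sqrt_lt_sqrt (by linarith) (by linarith)
  have hpoly : a2*b1*b2 + a1*a2*b1 = a1*b1*b2 + a1*a2*b2 := by
    field_simp at h
    linarith [h]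
  have hd : (a2-a1)*(a1+a2) = (b2-b1)*(b1+b2) := by
    linear_combination sa2 - sa1 - sb2 + sb1
  have h1 : (a2-a1)*(b1*b2) = (b2-b1)*(a1*a2) := by linear_combination hpoly
  have h2 : (b2-b1)*(b1*b2*(b1+b2)) = (b2-b1)*(a1*a2*(a1+a2)) := by
    linear_combination (a1+a2)*h1 - (b1*b2)*hd
  have h3 : b1*b2*(b1+b2) = a1*a2*(a1+a2) :=
    mul_left_cancel₀ (ne_of_gt (sub_pos.2 h34)) h2
  nlinarith [mul_pos pa1 pa2, mul_pos pb1 pb2, mul_pos (sub_pos.2 h13) (sub_pos.2 h24)]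

/-- symmetric version: only needs `A ≠ B`, `t1 ≠ t2`. -/
lemma key_ineq' (A B t1 t2 : ℝ) (hA : 0 < A) (hB : 0 < B) (ht1 : 0 ≤ t1) (ht2 : 0 ≤ t2)
    (hAB : A ≠ B) (ht : t1 ≠ t2) :
    1/Real.sqrt (A+t1) + 1/Real.sqrt (B+t2) ≠ 1/Real.sqrt (A+t2) + 1/Real.sqrt (B+t1) := by
  rcases lt_or_gt_of_ne hAB with h1 | h1 <;> rcases lt_or_gt_of_ne ht with h2 | h2 <;> intro h
  · exact key_ineq A B t1 t2 hA ht1 ht2 h1 h2 h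
  · exact key_ineq A B t2 t1 hA ht2 ht1 h1 h2 (by linarith)
  · exact key_ineq B A t1 t2 hB ht1 ht2 h1 h2 (by linarith)
  · exact key_ineq B A t2 t1 hB ht2 ht1 h1 h2 (by linarith)

lemma exists_ne_of_deriv_ne (f : ℝ → ℝ) (s : Set ℝ) (hs : IsOpen s) (u : ℝ) (hu : u ∈ s)
    (hd : deriv f u ≠ 0) : ∃ u1 ∈ s, f u1 ≠ f u := by
  by_contra hcon
  push_neg at hcon
  have hev : f =ᶠ[nhds u] fun _ => f u := by
    filter_upwards [hs.mem_nhds hu] with x hx using hcon x hx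
  have := hev.deriv_eq
  simp [this] at hd

/-- If `a[(1+α(u)²)/α'(u) + (1+β(v)²)/β'(v)] = −b/√(1+α(u)²+β(v)²)` holds on `I × J`
with `α' ≠ 0` on `I`, `β' ≠ 0` on `J`, then differentiating in `u` and then in `v` gives
`3b α(u)β(v)α'(u)β'(v)(1+α(u)²+β(v)²)^{−5/2} = 0`, hence `b·α(u)β(v) = 0` on `I × J`. -/
theorem stmt_12 (α β : ℝ → ℝ) (hα : ContDiff ℝ (⊤ : ℕ∞) α) (hβ : ContDiff ℝ (⊤ : ℕ∞) β)
    (a b : ℝ) (I J : Set ℝ) (hI : IsOpen I) (hJ : IsOpen J)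
    (hIne : I.Nonempty) (hJne : J.Nonempty)
    (hα' : ∀ u ∈ I, deriv α u ≠ 0) (hβ' : ∀ v ∈ J, deriv β v ≠ 0)
    (heq : ∀ u ∈ I, ∀ v ∈ J,
      a * ((1 + α u ^ 2) / deriv α u + (1 + β v ^ 2) / deriv β v) =
        -b / Real.sqrt (1 + α u ^ 2 + β v ^ 2)) :
    ∀ u ∈ I, ∀ v ∈ J,
      3 * b * α u * β v * deriv α u * deriv β v *
          (1 + α u ^ 2 + β v ^ 2) ^ (-(5 : ℝ) / 2) = 0 ∧
        b * α u * β v = 0 := by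
  intro u hu v hv
  have hmain : b * α u * β v = 0 := by
    by_contra hne
    have hb : b ≠ 0 := fun h => hne (by simp [h])
    have hαu : α u ≠ 0 := fun h => hne (by simp [h])
    have hβv : β v ≠ 0 := fun h => hne (by simp [h])
    -- find u1 with α u1 ^ 2 ≠ α u ^ 2
    have hdα : deriv (fun x => α x ^ 2) u ≠ 0 := by
      have h1 : HasDerivAt (fun x => α x ^ 2) ((2 : ℕ) * α u ^ 1 * deriv α u) u :=
        ((hα.differentiable (by simp) u).hasDerivAt).pow 2
      rw [h1.deriv]
      simp only [pow_one]
      exact mul_ne_zero (mul_ne_zero two_ne_zero hαu) (hα' u hu)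
    have hdβ : deriv (fun x => β x ^ 2) v ≠ 0 := by
      have h1 : HasDerivAt (fun x => β x ^ 2) ((2 : ℕ) * β v ^ 1 * deriv β v) v :=
        ((hβ.differentiable (by simp) v).hasDerivAt).pow 2
      rw [h1.deriv]
      simp only [pow_one]
      exact mul_ne_zero (mul_ne_zero two_ne_zero hβv) (hβ' v hv)
    obtain ⟨u1, hu1, hαne⟩ := exists_ne_of_deriv_ne (fun x => α x ^ 2) I hI u hu hdα
    obtain ⟨v1, hv1, hβne⟩ := exists_ne_of_deriv_ne (fun x => β x ^ 2) J hJ v hv hdβ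
    -- rectangle identity
    have hs : ∀ x y : ℝ, 0 < Real.sqrt (1 + x ^ 2 + y ^ 2) := fun x y =>
      Real.sqrt_pos.2 (by positivity)
    have hrect : b / Real.sqrt (1 + α u ^ 2 + β v ^ 2)
        + b / Real.sqrt (1 + α u1 ^ 2 + β v1 ^ 2)
        = b / Real.sqrt (1 + α u ^ 2 + β v1 ^ 2)
        + b / Real.sqrt (1 + α u1 ^ 2 + β v ^ 2) := by
      linear_combination heq u hu v hv + heq u1 hu1 v1 hv1 - heq u hu v1 hv1 - heq u1 hu1 v hv
    have hrect' : 1 / Real.sqrt ((1 + α u ^ 2) + β v ^ 2)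
        + 1 / Real.sqrt ((1 + α u1 ^ 2) + β v1 ^ 2)
        = 1 / Real.sqrt ((1 + α u ^ 2) + β v1 ^ 2)
        + 1 / Real.sqrt ((1 + α u1 ^ 2) + β v ^ 2) := by
      have h2 : b * (1 / Real.sqrt (1 + α u ^ 2 + β v ^ 2)
          + 1 / Real.sqrt (1 + α u1 ^ 2 + β v1 ^ 2))
          = b * (1 / Real.sqrt (1 + α u ^ 2 + β v1 ^ 2)
          + 1 / Real.sqrt (1 + α u1 ^ 2 + β v ^ 2)) := by
        field_simp
        field_simp at hrect
        linarith [hrect]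
      exact mul_left_cancel₀ hb h2
    exact key_ineq' (1 + α u ^ 2) (1 + α u1 ^ 2) (β v ^ 2) (β v1 ^ 2)
      (by positivity) (by positivity) (by positivity) (by positivity)
      (fun h => hαne (by linarith)) (Ne.symm hβne) hrect'
  refine ⟨?_, hmain⟩
  linear_combination (3 * deriv α u * deriv β v * (1 + α u ^ 2 + β v ^ 2) ^ (-(5 : ℝ) / 2)) * hmain
end

section
/- A translation surface r(u,v) = (u,v,f(u)+g(v)) with f, g smooth satisfying 2aH + bK = 0 for constants (a,b) ≠ (0,0) is either minimal (H ≡ 0) or flat (K ≡ 0, i.e., f'' ≡ 0 or g'' ≡ 0 on each connected component appropriately), assuming the domain is connected. -/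
/-- Core rectangle inequality for `1/√(1+x+y)`. -/
lemma sqrt_rect (x₁ x₂ y₁ y₂ : ℝ) (hx : x₁ < x₂) (hy : y₁ < y₂)
    (hx1 : 0 ≤ x₁) (hy1 : 0 ≤ y₁)
    (heq : 1 / Real.sqrt (1 + x₁ + y₁) + 1 / Real.sqrt (1 + x₂ + y₂) =
      1 / Real.sqrt (1 + x₁ + y₂) + 1 / Real.sqrt (1 + x₂ + y₁)) : False := by
  set p := Real.sqrt (1 + x₁ + y₁) with hp'
  set q := Real.sqrt (1 + x₂ + y₁) with hq'
  set r := Real.sqrt (1 + x₁ + y₂) with hr'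
  set t := Real.sqrt (1 + x₂ + y₂) with ht'
  have hp : 0 < p := Real.sqrt_pos.mpr (by linarith)
  have hq : 0 < q := Real.sqrt_pos.mpr (by linarith)
  have hr : 0 < r := Real.sqrt_pos.mpr (by linarith)
  have ht : 0 < t := Real.sqrt_pos.mpr (by linarith)
  have hp2 : p ^ 2 = 1 + x₁ + y₁ := Real.sq_sqrt (by linarith)
  have hq2 : q ^ 2 = 1 + x₂ + y₁ := Real.sq_sqrt (by linarith)
  have hr2 : r ^ 2 = 1 + x₁ + y₂ := Real.sq_sqrt (by linarith)
  have ht2 : t ^ 2 = 1 + x₂ + y₂ := Real.sq_sqrt (by linarith)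
  have hpq : p < q := Real.sqrt_lt_sqrt (by linarith) (by linarith)
  have hpr : p < r := Real.sqrt_lt_sqrt (by linarith) (by linarith)
  have hqt : q < t := Real.sqrt_lt_sqrt (by linarith) (by linarith)
  have hrt : r < t := Real.sqrt_lt_sqrt (by linarith) (by linarith)
  have e1 : (q - p) / (p * q) = (t - r) / (r * t) := by
    have l1 : (q - p) / (p * q) = 1 / p - 1 / q := by field_simp
    have l2 : (t - r) / (r * t) = 1 / r - 1 / t := by field_simp
    rw [l1, l2]; linarith
  have key : (q - p) * (r * t) = (t - r) * (p * q) :=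
    (div_eq_div_iff (by positivity) (by positivity)).mp e1
  have hd : (q - p) * (q + p) = (t - r) * (t + r) := by
    linear_combination hq2 - hp2 - ht2 + hr2
  have key2 : (q - p) * (q + p) * (r * t * (t + r)) =
      (t - r) * (t + r) * (p * q * (q + p)) := by
    linear_combination (q + p) * (t + r) * key
  rw [hd] at key2
  have hd0 : 0 < (t - r) * (t + r) := mul_pos (by linarith) (by linarith)
  have hfin : r * t * (t + r) = p * q * (q + p) := mul_left_cancel₀ (ne_of_gt hd0) key2
  have h1 : p * q < r * t := by
    calc p * q < r * q := mul_lt_mul_of_pos_right hpr hq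
    _ < r * t := mul_lt_mul_of_pos_left hqt hr
  have h2 : p * q * (q + p) < r * t * (t + r) :=
    mul_lt_mul'' h1 (by linarith) (le_of_lt (mul_pos hp hq)) (by linarith)
  linarith

/-- The `≠`-version of the rectangle inequality. -/
lemma sqrt_rect' (x₁ x₂ y₁ y₂ : ℝ) (hx : x₁ ≠ x₂) (hy : y₁ ≠ y₂)
    (hx1 : 0 ≤ x₁) (hx2 : 0 ≤ x₂) (hy1 : 0 ≤ y₁) (hy2 : 0 ≤ y₂)
    (heq : 1 / Real.sqrt (1 + x₁ + y₁) + 1 / Real.sqrt (1 + x₂ + y₂) =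
      1 / Real.sqrt (1 + x₁ + y₂) + 1 / Real.sqrt (1 + x₂ + y₁)) : False := by
  rcases hx.lt_or_gt with h | h <;> rcases hy.lt_or_gt with h' | h'
  · exact sqrt_rect x₁ x₂ y₁ y₂ h h' hx1 hy1 heq
  · exact sqrt_rect x₁ x₂ y₂ y₁ h h' hx1 hy2 (by linarith)
  · exact sqrt_rect x₂ x₁ y₁ y₂ h h' hx2 hy1 (by linarith)
  · exact sqrt_rect x₂ x₁ y₂ y₁ h h' hx2 hy2 (by linarith)

/-- A continuous nowhere-vanishing real function has constant sign. -/
lemma sign_const {φ : ℝ → ℝ} (hc : Continuous φ) (h0 : ∀ x, φ x ≠ 0) :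
    (∀ x, 0 < φ x) ∨ (∀ x, φ x < 0) := by
  by_contra h
  push_neg at h
  obtain ⟨⟨x, hx⟩, ⟨y, hy⟩⟩ := h
  have h0m : (0:ℝ) ∈ Set.uIcc (φ x) (φ y) := Set.mem_uIcc.mpr (Or.inl ⟨hx, hy⟩)
  obtain ⟨z, _, hz⟩ := intermediate_value_uIcc (hc.continuousOn (s := Set.uIcc x y)) h0m
  exact h0 z hz

/-- An injective real function takes two values with distinct squares. -/
lemma exists_sq_ne {φ : ℝ → ℝ} (hinj : Function.Injective φ) :
    ∃ u₁ u₂ : ℝ, φ u₁ ^ 2 ≠ φ u₂ ^ 2 := by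
  by_contra h
  push_neg at h
  have h1 : φ 1 = -φ 0 := by
    have e : (φ 1 - φ 0) * (φ 1 + φ 0) = 0 := by linear_combination h 1 0
    rcases mul_eq_zero.mp e with e | e
    · exact absurd (hinj (by linarith : φ 1 = φ 0)) one_ne_zero
    · linarith
  have h2 : φ 2 = -φ 0 := by
    have e : (φ 2 - φ 0) * (φ 2 + φ 0) = 0 := by linear_combination h 2 0
    rcases mul_eq_zero.mp e with e | e
    · exact absurd (hinj (by linarith : φ 2 = φ 0)) two_ne_zero
    · linarith
  exact absurd (hinj (h1.trans h2.symm)) (by norm_num)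

/-- A translation surface `r(u,v) = (u,v,f(u)+g(v))` (over the connected domain `ℝ²`)
satisfying `2aH + bK = 0` with `(a,b) ≠ (0,0)` is either minimal (`H ≡ 0`) or flat
(`K ≡ 0`, with `f'' ≡ 0` or `g'' ≡ 0`). -/
theorem stmt_13 (f g : ℝ → ℝ) (hf : ContDiff ℝ (⊤ : ℕ∞) f) (hg : ContDiff ℝ (⊤ : ℕ∞) g)
    (a b : ℝ) (hab : (a, b) ≠ (0, 0))
    (hW : ∀ u v : ℝ,
      2 * a * meanCurv (deriv f) (deriv g) u v + b * gaussCurv (deriv f) (deriv g) u v = 0) :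
    (∀ u v : ℝ, meanCurv (deriv f) (deriv g) u v = 0) ∨
      ((∀ u v : ℝ, gaussCurv (deriv f) (deriv g) u v = 0) ∧
        ((∀ u : ℝ, deriv (deriv f) u = 0) ∨ (∀ v : ℝ, deriv (deriv g) v = 0))) := by
  classical
  have hD : ∀ u v : ℝ, (0:ℝ) < 1 + deriv f u ^ 2 + deriv g v ^ 2 := fun u v => by positivity
  -- The cleared form of the Weingarten relation.
  have hE : ∀ u v : ℝ,
      a * ((1 + deriv g v ^ 2) * deriv (deriv f) u + (1 + deriv f u ^ 2) * deriv (deriv g) v) *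
        Real.sqrt (1 + deriv f u ^ 2 + deriv g v ^ 2) +
        b * (deriv (deriv f) u * deriv (deriv g) v) = 0 := by
    intro u v
    have h := hW u v
    set S := Real.sqrt (1 + deriv f u ^ 2 + deriv g v ^ 2) with hS'
    have hS : 0 < S := Real.sqrt_pos.mpr (hD u v)
    have hS2 : S ^ 2 = 1 + deriv f u ^ 2 + deriv g v ^ 2 := Real.sq_sqrt (hD u v).le
    have h32 : (1 + deriv f u ^ 2 + deriv g v ^ 2) ^ ((3:ℝ)/2) = S ^ 3 := by
      rw [← hS2, ← Real.rpow_natCast S 2, ← Real.rpow_mul hS.le, ← Real.rpow_natCast S 3]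
      norm_num
    have h4 : (1 + deriv f u ^ 2 + deriv g v ^ 2) ^ 2 = S ^ 4 := by rw [← hS2]; ring
    rw [meanCurv, gaussCurv, h32, h4] at h
    field_simp at h
    have h2 : (a * ((1 + deriv g v ^ 2) * deriv (deriv f) u +
        (1 + deriv f u ^ 2) * deriv (deriv g) v) * S +
        b * (deriv (deriv f) u * deriv (deriv g) v)) * (2 * S ^ 3) = 0 := by
      linear_combination (2 * S ^ 3) * h
    rcases mul_eq_zero.mp h2 with h3 | h3
    · exact h3
    · exact absurd h3 (by positivity)
  by_cases ha : a = 0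
  · -- flat case
    have hb : b ≠ 0 := by
      intro hb; exact hab (by rw [ha, hb])
    have hK : ∀ u v : ℝ, deriv (deriv f) u * deriv (deriv g) v = 0 := by
      intro u v
      have h := hE u v
      rw [ha] at h
      have h2 : b * (deriv (deriv f) u * deriv (deriv g) v) = 0 := by linear_combination h
      exact (mul_eq_zero.mp h2).resolve_left hb
    right
    refine ⟨fun u v => ?_, ?_⟩
    · rw [gaussCurv, hK u v, zero_div]
    · by_cases hF : ∀ u : ℝ, deriv (deriv f) u = 0
      · exact Or.inl hF
      · push_neg at hF
        obtain ⟨u₀, hu₀⟩ := hF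
        exact Or.inr fun v => (mul_eq_zero.mp (hK u₀ v)).resolve_left hu₀
  · -- minimal case
    left
    have hP : ∀ u v : ℝ,
        (1 + deriv g v ^ 2) * deriv (deriv f) u + (1 + deriv f u ^ 2) * deriv (deriv g) v = 0 := by
      by_contra hcon
      push_neg at hcon
      obtain ⟨u₀, v₀, hP0⟩ := hcon
      have hS0 : (0:ℝ) < Real.sqrt (1 + deriv f u₀ ^ 2 + deriv g v₀ ^ 2) :=
        Real.sqrt_pos.mpr (hD u₀ v₀)
      have hprod : b * (deriv (deriv f) u₀ * deriv (deriv g) v₀) ≠ 0 := by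
        intro h0
        have h1 : a * ((1 + deriv g v₀ ^ 2) * deriv (deriv f) u₀ +
            (1 + deriv f u₀ ^ 2) * deriv (deriv g) v₀) *
            Real.sqrt (1 + deriv f u₀ ^ 2 + deriv g v₀ ^ 2) = 0 := by
          linear_combination hE u₀ v₀ - h0
        rcases mul_eq_zero.mp h1 with h2 | h2
        · rcases mul_eq_zero.mp h2 with h3 | h3
          · exact ha h3
          · exact hP0 h3
        · exact hS0.ne' h2
      have hb : b ≠ 0 := fun h => hprod (by rw [h]; ring)
      have hA0 : deriv (deriv f) u₀ ≠ 0 := fun h => hprod (by rw [h]; ring)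
      have hB0 : deriv (deriv g) v₀ ≠ 0 := fun h => hprod (by rw [h]; ring)
      -- second derivatives never vanish
      have hAall : ∀ u : ℝ, deriv (deriv f) u ≠ 0 := by
        intro u h0
        have h1 := hE u v₀
        rw [h0] at h1
        have h2 : (a * (1 + deriv f u ^ 2) * deriv (deriv g) v₀) *
            Real.sqrt (1 + deriv f u ^ 2 + deriv g v₀ ^ 2) = 0 := by linear_combination h1
        have hSu : (0:ℝ) < Real.sqrt (1 + deriv f u ^ 2 + deriv g v₀ ^ 2) :=
          Real.sqrt_pos.mpr (hD u v₀)
        rcases mul_eq_zero.mp h2 with h3 | h3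
        · rcases mul_eq_zero.mp h3 with h4 | h4
          · rcases mul_eq_zero.mp h4 with h5 | h5
            · exact ha h5
            · nlinarith [sq_nonneg (deriv f u)]
          · exact hB0 h4
        · exact hSu.ne' h3
      have hBall : ∀ v : ℝ, deriv (deriv g) v ≠ 0 := by
        intro v h0
        have h1 := hE u₀ v
        rw [h0] at h1
        have h2 : (a * (1 + deriv g v ^ 2) * deriv (deriv f) u₀) *
            Real.sqrt (1 + deriv f u₀ ^ 2 + deriv g v ^ 2) = 0 := by linear_combination h1
        have hSv : (0:ℝ) < Real.sqrt (1 + deriv f u₀ ^ 2 + deriv g v ^ 2) :=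
          Real.sqrt_pos.mpr (hD u₀ v)
        rcases mul_eq_zero.mp h2 with h3 | h3
        · rcases mul_eq_zero.mp h3 with h4 | h4
          · rcases mul_eq_zero.mp h4 with h5 | h5
            · exact ha h5
            · nlinarith [sq_nonneg (deriv g v)]
          · exact hA0 h4
        · exact hSv.ne' h3
      -- injectivity of the first derivatives
      have hf1 := (contDiff_infty_iff_deriv.mp (hf.of_le (by simp))).2
      have hfc : Continuous (deriv (deriv f)) := (contDiff_infty_iff_deriv.mp hf1).2.continuous
      have hg1 := (contDiff_infty_iff_deriv.mp (hg.of_le (by simp))).2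
      have hgc : Continuous (deriv (deriv g)) := (contDiff_infty_iff_deriv.mp hg1).2.continuous
      have hfinj : Function.Injective (deriv f) := by
        rcases sign_const hfc hAall with hpos | hneg
        · exact (strictMono_of_deriv_pos hpos).injective
        · exact (strictAnti_of_deriv_neg hneg).injective
      have hginj : Function.Injective (deriv g) := by
        rcases sign_const hgc hBall with hpos | hneg
        · exact (strictMono_of_deriv_pos hpos).injective
        · exact (strictAnti_of_deriv_neg hneg).injective
      obtain ⟨u₁, u₂, hx⟩ := exists_sq_ne hfinj
      obtain ⟨v₁, v₂, hy⟩ := exists_sq_ne hginj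
      -- the separated form of the relation
      have hsep : ∀ u v : ℝ,
          a * (1 + deriv g v ^ 2) / deriv (deriv g) v +
            a * (1 + deriv f u ^ 2) / deriv (deriv f) u +
            b / Real.sqrt (1 + deriv f u ^ 2 + deriv g v ^ 2) = 0 := by
        intro u v
        have hS : 0 < Real.sqrt (1 + deriv f u ^ 2 + deriv g v ^ 2) :=
          Real.sqrt_pos.mpr (hD u v)
        have hA := hAall u
        have hB := hBall v
        field_simp
        linear_combination hE u v
      have h11 := hsep u₁ v₁
      have h12 := hsep u₁ v₂
      have h21 := hsep u₂ v₁
      have h22 := hsep u₂ v₂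
      have hcomb : b / Real.sqrt (1 + deriv f u₁ ^ 2 + deriv g v₁ ^ 2) +
          b / Real.sqrt (1 + deriv f u₂ ^ 2 + deriv g v₂ ^ 2) -
          b / Real.sqrt (1 + deriv f u₁ ^ 2 + deriv g v₂ ^ 2) -
          b / Real.sqrt (1 + deriv f u₂ ^ 2 + deriv g v₁ ^ 2) = 0 := by linarith
      have hmul : b * (1 / Real.sqrt (1 + deriv f u₁ ^ 2 + deriv g v₁ ^ 2) +
          1 / Real.sqrt (1 + deriv f u₂ ^ 2 + deriv g v₂ ^ 2) -
          (1 / Real.sqrt (1 + deriv f u₁ ^ 2 + deriv g v₂ ^ 2) +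
          1 / Real.sqrt (1 + deriv f u₂ ^ 2 + deriv g v₁ ^ 2))) = 0 := by
        linear_combination hcomb
      have heq : 1 / Real.sqrt (1 + deriv f u₁ ^ 2 + deriv g v₁ ^ 2) +
          1 / Real.sqrt (1 + deriv f u₂ ^ 2 + deriv g v₂ ^ 2) =
          1 / Real.sqrt (1 + deriv f u₁ ^ 2 + deriv g v₂ ^ 2) +
          1 / Real.sqrt (1 + deriv f u₂ ^ 2 + deriv g v₁ ^ 2) := by
        have h := (mul_eq_zero.mp hmul).resolve_left hb
        linarith
      exact sqrt_rect' (deriv f u₁ ^ 2) (deriv f u₂ ^ 2) (deriv g v₁ ^ 2) (deriv g v₂ ^ 2)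
        hx hy (sq_nonneg _) (sq_nonneg _) (sq_nonneg _) (sq_nonneg _) heq
    intro u v
    rw [meanCurv, hP u v, zero_div]
end

section
/- Let α(u) = au^p, β(v) = bv^q with a, b ≠ 0 and p, q rational, p, q ≠ 0, u, v > 0. If the vanishing second Gaussian curvature condition a(3p−1)u^p v + a²b(3q−1)u^{2p+1}v^q + a³(−p−1)u^{3p}v + b(3q−1)uv^q + ab²(3p−1)u^p v^{2q+1} + b³(−q−1)uv^{3q} = 0 holds for all u, v > 0, then p = q = 1/3 and a = −b. -/
private lemma two_rpow_ne {r s : ℝ} (h : r ≠ s) : (2:ℝ) ^ r ≠ (2:ℝ) ^ s := by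
  rcases h.lt_or_gt with hl | hl
  · exact ne_of_lt ((Real.rpow_lt_rpow_left_iff (by norm_num)).2 hl)
  · exact (ne_of_lt ((Real.rpow_lt_rpow_left_iff (by norm_num)).2 hl)).symm

private lemma rpow_four' (r : ℝ) : (4:ℝ) ^ r = ((2:ℝ) ^ r) ^ 2 := by
  rw [show (4:ℝ) = 2*2 by norm_num, Real.mul_rpow (by norm_num) (by norm_num)]; ring

private lemma rpow_eight' (r : ℝ) : (8:ℝ) ^ r = ((2:ℝ) ^ r) ^ 3 := by
  rw [show (8:ℝ) = 2*(2*2) by norm_num, Real.mul_rpow (by norm_num) (by norm_num),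
    Real.mul_rpow (by norm_num) (by norm_num)]; ring

private lemma indep2 (c1 c2 r1 r2 : ℝ) (h12 : r1 ≠ r2)
    (h : ∀ u : ℝ, 0 < u → c1 * u ^ r1 + c2 * u ^ r2 = 0) : c1 = 0 := by
  have h0 := h 1 one_pos
  have h1 := h 2 (by norm_num)
  simp only [Real.one_rpow] at h0
  have key : c1 * ((2:ℝ) ^ r1 - (2:ℝ) ^ r2) = 0 := by linear_combination h1 - (2:ℝ) ^ r2 * h0
  exact (mul_eq_zero.1 key).resolve_right (sub_ne_zero.2 (two_rpow_ne h12))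

private lemma indep3 (c1 c2 c3 r1 r2 r3 : ℝ) (h12 : r1 ≠ r2) (h13 : r1 ≠ r3)
    (h : ∀ u : ℝ, 0 < u → c1 * u ^ r1 + c2 * u ^ r2 + c3 * u ^ r3 = 0) : c1 = 0 := by
  have h0 := h 1 one_pos
  have h1 := h 2 (by norm_num)
  have h2 := h 4 (by norm_num)
  simp only [Real.one_rpow] at h0
  rw [rpow_four' r1, rpow_four' r2, rpow_four' r3] at h2
  set x1 := (2:ℝ) ^ r1
  set x2 := (2:ℝ) ^ r2
  set x3 := (2:ℝ) ^ r3
  have key : c1 * ((x1 - x2) * (x1 - x3)) = 0 := by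
    linear_combination h2 - (x2 + x3) * h1 + x2 * x3 * h0
  rcases mul_eq_zero.1 key with hc | hc
  · exact hc
  · exact absurd hc (mul_ne_zero (sub_ne_zero.2 (two_rpow_ne h12)) (sub_ne_zero.2 (two_rpow_ne h13)))

private lemma indep4 (c1 c2 c3 c4 r1 r2 r3 r4 : ℝ) (h12 : r1 ≠ r2) (h13 : r1 ≠ r3) (h14 : r1 ≠ r4)
    (h : ∀ u : ℝ, 0 < u → c1 * u ^ r1 + c2 * u ^ r2 + c3 * u ^ r3 + c4 * u ^ r4 = 0) :
    c1 = 0 := by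
  have h0 := h 1 one_pos
  have h1 := h 2 (by norm_num)
  have h2 := h 4 (by norm_num)
  have h3 := h 8 (by norm_num)
  simp only [Real.one_rpow] at h0
  rw [rpow_four' r1, rpow_four' r2, rpow_four' r3, rpow_four' r4] at h2
  rw [rpow_eight' r1, rpow_eight' r2, rpow_eight' r3, rpow_eight' r4] at h3
  set x1 := (2:ℝ) ^ r1
  set x2 := (2:ℝ) ^ r2
  set x3 := (2:ℝ) ^ r3
  set x4 := (2:ℝ) ^ r4
  have key : c1 * ((x1 - x2) * (x1 - x3) * (x1 - x4)) = 0 := by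
    linear_combination h3 - (x2 + x3 + x4) * h2 + (x2*x3 + x2*x4 + x3*x4) * h1 - x2*x3*x4 * h0
  rcases mul_eq_zero.1 key with hc | hc
  · exact hc
  · exact absurd hc (mul_ne_zero (mul_ne_zero (sub_ne_zero.2 (two_rpow_ne h12))
      (sub_ne_zero.2 (two_rpow_ne h13))) (sub_ne_zero.2 (two_rpow_ne h14)))

private lemma aux15 (a b : ℝ) (ha : a ≠ 0) (hb : b ≠ 0) (p q : ℚ) (hp : p ≠ 0) (hq : q ≠ 0)
    (h : ∀ u v : ℝ, 0 < u → 0 < v →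
      a * (3 * (p : ℝ) - 1) * u ^ (p : ℝ) * v +
        a ^ 2 * b * (3 * (q : ℝ) - 1) * u ^ (2 * (p : ℝ) + 1) * v ^ (q : ℝ) +
        a ^ 3 * (-(p : ℝ) - 1) * u ^ (3 * (p : ℝ)) * v +
        b * (3 * (q : ℝ) - 1) * u * v ^ (q : ℝ) +
        a * b ^ 2 * (3 * (p : ℝ) - 1) * u ^ (p : ℝ) * v ^ (2 * (q : ℝ) + 1) +
        b ^ 3 * (-(q : ℝ) - 1) * u * v ^ (3 * (q : ℝ)) = 0) :
    p = 1 / 3 := by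
  have hqR : (q:ℝ) ≠ 0 := by exact_mod_cast hq
  rcases eq_or_ne p 1 with rfl | hp1
  · -- case p = 1 : contradiction
    exfalso
    have h2 : ∀ v : ℝ, 0 < v → ∀ u : ℝ, 0 < u →
        (a^2*b*(3*(q:ℝ)-1) * v ^ (q:ℝ) - 2*a^3*v) * u ^ (3:ℝ)
        + (2*a*v + b*(3*(q:ℝ)-1)*v^(q:ℝ) + 2*a*b^2*v^(2*(q:ℝ)+1)
            + b^3*(-(q:ℝ)-1)*v^(3*(q:ℝ))) * u ^ (1:ℝ) = 0 := by
      intro v hv u hu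
      have H := h u v hu hv
      norm_num at H ⊢
      linear_combination H
    have hA : ∀ v : ℝ, 0 < v → a^2*b*(3*(q:ℝ)-1) * v ^ (q:ℝ) - 2*a^3*v = 0 :=
      fun v hv => indep2 _ _ 3 1 (by norm_num) (h2 v hv)
    have hB : ∀ v : ℝ, 0 < v → 2*a*v + b*(3*(q:ℝ)-1)*v^(q:ℝ) + 2*a*b^2*v^(2*(q:ℝ)+1)
        + b^3*(-(q:ℝ)-1)*v^(3*(q:ℝ)) = 0 := by
      intro v hv
      exact indep2 _ (a^2*b*(3*(q:ℝ)-1) * v ^ (q:ℝ) - 2*a^3*v) 1 3 (by norm_num)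
        (fun u hu => by linear_combination h2 v hv u hu)
    rcases eq_or_ne q 1 with rfl | hq1
    · -- q = 1
      have h1 := hA 1 one_pos
      norm_num at h1
      have hba : b = a := by
        have key : a^2 * (b - a) = 0 := by linear_combination h1/2
        have := (mul_eq_zero.1 key).resolve_left (pow_ne_zero 2 ha)
        linarith [sub_eq_zero.1 this]
      have h1' := hB 1 one_pos
      norm_num [hba] at h1'
      exact ha (by linarith)
    · -- q ≠ 1
      have hq1R : (1:ℝ) ≠ (q:ℝ) := by
        intro e; exact hq1 (by exact_mod_cast e.symm)
      have : -(2*a^3) = 0 := by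
        refine indep2 (-(2*a^3)) (a^2*b*(3*(q:ℝ)-1)) 1 (q:ℝ) hq1R ?_
        intro v hv
        rw [Real.rpow_one]
        linear_combination hA v hv
      have ha3 : a^3 = 0 := by linarith
      exact ha ((pow_eq_zero_iff (three_ne_zero)).1 ha3)
  rcases eq_or_ne p (-1) with rfl | hpm
  · -- case p = -1 : contradiction
    exfalso
    have h2 : ∀ v : ℝ, 0 < v → ∀ u : ℝ, 0 < u →
        (-4*a*v + a^2*b*(3*(q:ℝ)-1)*v^(q:ℝ) - 4*a*b^2*v^(2*(q:ℝ)+1)) * u ^ (-1:ℝ)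
        + (b*(3*(q:ℝ)-1)*v^(q:ℝ) + b^3*(-(q:ℝ)-1)*v^(3*(q:ℝ))) * u ^ (1:ℝ) = 0 := by
      intro v hv u hu
      have H := h u v hu hv
      norm_num at H ⊢
      linear_combination H
    have hC : ∀ v : ℝ, 0 < v →
        -4*a*v + a^2*b*(3*(q:ℝ)-1)*v^(q:ℝ) - 4*a*b^2*v^(2*(q:ℝ)+1) = 0 :=
      fun v hv => indep2 _ _ (-1) 1 (by norm_num) (h2 v hv)
    rcases eq_or_ne q 1 with rfl | hq1
    · have key : -(4*a*b^2) = 0 := by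
        refine indep2 (-(4*a*b^2)) (-4*a + 2*a^2*b) 3 1 (by norm_num) ?_
        intro v hv
        have := hC v hv
        norm_num at this ⊢
        linear_combination this
      have : a * b^2 = 0 := by linarith
      exact ha ((mul_eq_zero.1 this).resolve_right (pow_ne_zero 2 hb))
    · rcases eq_or_ne q (-1) with rfl | hqm
      · have key : -(4*a) = 0 := by
          refine indep2 (-(4*a)) (-(4*a^2*b) - 4*a*b^2) 1 (-1) (by norm_num) ?_
          intro v hv
          have := hC v hv
          norm_num at this ⊢
          linear_combination this
        exact ha (by linarith)
      · have hq1R : (1:ℝ) ≠ (q:ℝ) := fun e => hq1 (by exact_mod_cast e.symm)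
        have hq2R : (1:ℝ) ≠ 2*(q:ℝ)+1 := by
          intro e; exact hqR (by linarith)
        have key : -(4*a) = 0 := by
          refine indep3 (-(4*a)) (a^2*b*(3*(q:ℝ)-1)) (-(4*a*b^2)) 1 (q:ℝ) (2*(q:ℝ)+1)
            hq1R hq2R ?_
          intro v hv
          rw [Real.rpow_one]
          linear_combination hC v hv
        exact ha (by linarith)
  · -- generic case : p = 1/3
    rcases eq_or_ne p (1/3) with rfl | hp3
    · rfl
    exfalso
    have hpR1 : (p:ℝ) ≠ 1 := by exact_mod_cast hp1
    have hpRm : (p:ℝ) ≠ -1 := by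
      intro e; exact hpm (by exact_mod_cast e)
    have hpR0 : (p:ℝ) ≠ 0 := by exact_mod_cast hp
    have h1 : ∀ u : ℝ, 0 < u →
        (a*(3*(p:ℝ)-1) + a*b^2*(3*(p:ℝ)-1)) * u ^ ((p:ℝ))
        + (a^2*b*(3*(q:ℝ)-1)) * u ^ (2*(p:ℝ)+1)
        + (a^3*(-(p:ℝ)-1)) * u ^ (3*(p:ℝ))
        + (b*(3*(q:ℝ)-1) + b^3*(-(q:ℝ)-1)) * u ^ (1:ℝ) = 0 := by
      intro u hu
      have H := h u 1 hu one_pos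
      rw [Real.rpow_one]
      simp only [Real.one_rpow, mul_one] at H
      linear_combination H
    have hc1 : a*(3*(p:ℝ)-1) + a*b^2*(3*(p:ℝ)-1) = 0 := by
      refine indep4 _ _ _ _ ((p:ℝ)) (2*(p:ℝ)+1) (3*(p:ℝ)) (1:ℝ) ?_ ?_ hpR1 h1
      · intro e; exact hpRm (by linarith)
      · intro e; exact hpR0 (by linarith)
    have key : (3*(p:ℝ)-1) * (a * (1 + b^2)) = 0 := by linear_combination hc1
    have hne : a * (1 + b^2) ≠ 0 := mul_ne_zero ha (by positivity)
    have : (3*(p:ℝ)-1) = 0 := (mul_eq_zero.1 key).resolve_right hne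
    have hcast : (p:ℝ) = ((1/3 : ℚ) : ℝ) := by push_cast; linarith
    exact hp3 (Rat.cast_injective hcast)

/-- Let `α(u) = au^p`, `β(v) = bv^q` with `a, b ≠ 0` and `p, q` nonzero rationals. If
`a(3p−1)u^p v + a²b(3q−1)u^{2p+1}v^q + a³(−p−1)u^{3p}v + b(3q−1)uv^q +
ab²(3p−1)u^p v^{2q+1} + b³(−q−1)uv^{3q} = 0` holds for all `u, v > 0`, then
`p = q = 1/3` and `a = −b`. -/
theorem stmt_15 (a b : ℝ) (ha : a ≠ 0) (hb : b ≠ 0) (p q : ℚ) (hp : p ≠ 0) (hq : q ≠ 0)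
    (h : ∀ u v : ℝ, 0 < u → 0 < v →
      a * (3 * (p : ℝ) - 1) * u ^ (p : ℝ) * v +
        a ^ 2 * b * (3 * (q : ℝ) - 1) * u ^ (2 * (p : ℝ) + 1) * v ^ (q : ℝ) +
        a ^ 3 * (-(p : ℝ) - 1) * u ^ (3 * (p : ℝ)) * v +
        b * (3 * (q : ℝ) - 1) * u * v ^ (q : ℝ) +
        a * b ^ 2 * (3 * (p : ℝ) - 1) * u ^ (p : ℝ) * v ^ (2 * (q : ℝ) + 1) +
        b ^ 3 * (-(q : ℝ) - 1) * u * v ^ (3 * (q : ℝ)) = 0) :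
    p = 1 / 3 ∧ q = 1 / 3 ∧ a = -b := by
  have hp3 : p = 1 / 3 := aux15 a b ha hb p q hp hq h
  have hq3 : q = 1 / 3 := by
    refine aux15 b a hb ha q p hq hp ?_
    intro u v hu hv
    linear_combination h v u hv hu
  refine ⟨hp3, hq3, ?_⟩
  subst hp3; subst hq3
  have H := h 1 1 one_pos one_pos
  norm_num at H
  have h3 : a ^ 3 = -b ^ 3 := by linarith
  exact ((pow_eq_neg_pow_iff hb).1 h3).1
end
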